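/- Assume φ is nonzero with φ(p)φ(q) = 0. Let x = Σ_{i=0}^{n} Xⁱ Σ_{j=0}^{m} hʲ a_{ij}(C)·w ∈ M_φ, where each a_{ij} ∈ ℂ[x]. Then (P₊ − φ(P₊))ⁿ·x = (−1)ⁿ n! Σ_{j=0}^{m} P₋ⁿ hʲ a_{nj}(C)·w. -/

import Mathlib

open UniversalEnvelopingAlgebra Polynomial

namespace QW

variable {S : Type} [LieRing S] [LieAlgebra ℂ S]

/-- The chosen elements `e, h, f, p, q, z` form a basis of `S` and satisfy the
structure constants of the Schrödinger algebra. -/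
structure IsSchrodinger (e h f p q z : S) : Prop where
  indep : LinearIndependent ℂ ![e, h, f, p, q, z]
  spans : Submodule.span ℂ (Set.range ![e, h, f, p, q, z]) = ⊤
  lie_he : ⁅h, e⁆ = (2 : ℂ) • e
  lie_hf : ⁅h, f⁆ = (-2 : ℂ) • f
  lie_ef : ⁅e, f⁆ = h
  lie_hp : ⁅h, p⁆ = p
  lie_hq : ⁅h, q⁆ = -q
  lie_pq : ⁅p, q⁆ = z
  lie_eq : ⁅e, q⁆ = p
  lie_pf : ⁅p, f⁆ = -q
  lie_fq : ⁅f, q⁆ = 0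
  lie_ep : ⁅e, p⁆ = 0
  lie_ze : ⁅z, e⁆ = 0
  lie_zh : ⁅z, h⁆ = 0
  lie_zf : ⁅z, f⁆ = 0
  lie_zp : ⁅z, p⁆ = 0
  lie_zq : ⁅z, q⁆ = 0

/-- `v` is a quasi-Whittaker vector of type `φ`, where the Lie algebra homomorphism
`φ : ℌ → ℂ` is recorded by its values `φp = φ(p)`, `φq = φ(q)` (necessarily `φ(z) = 0`). -/
def IsQWVector (p q z : S) {V : Type} [AddCommGroup V] [Module ℂ V] [LieRingModule S V]
    (φp φq : ℂ) (v : V) : Prop :=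
  v ≠ 0 ∧ ⁅p, v⁆ = φp • v ∧ ⁅q, v⁆ = φq • v ∧ ⁅z, v⁆ = 0

/-- `V` is a quasi-Whittaker module of type `φ`: it is generated by a
quasi-Whittaker vector of type `φ`. -/
def IsQWModule (p q z : S) (V : Type) [AddCommGroup V] [Module ℂ V]
    [LieRingModule S V] [LieModule ℂ S V] (φp φq : ℂ) : Prop :=
  ∃ v : V, IsQWVector p q z φp φq v ∧ LieSubmodule.lieSpan ℂ S {v} = ⊤

/-- The action of the universal enveloping algebra `U(𝔖)` on a `𝔖`-module. -/
noncomputable def uact {V : Type} [AddCommGroup V] [Module ℂ V] [LieRingModule S V]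
    [LieModule ℂ S V] (u : UniversalEnvelopingAlgebra ℂ S) (v : V) : V :=
  UniversalEnvelopingAlgebra.lift ℂ (LieModule.toEnd ℂ S V) u v

/-- The element `C = φ(p)²f − φ(q)²e − φ(p)φ(q)h ∈ U(𝔖)`. -/
noncomputable def Cel (e h f : S) (φp φq : ℂ) : UniversalEnvelopingAlgebra ℂ S :=
  φp ^ 2 • ι ℂ f - φq ^ 2 • ι ℂ e - (φp * φq) • ι ℂ h

/-- The element `C₀ = p²f − q²e − hpq ∈ U(𝔖)`. -/
noncomputable def C0 (e h f p q : S) : UniversalEnvelopingAlgebra ℂ S :=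
  ι ℂ p ^ 2 * ι ℂ f - ι ℂ q ^ 2 * ι ℂ e - ι ℂ h * ι ℂ p * ι ℂ q

/-- `δ_{a,0}`, as a complex scalar. -/
noncomputable def dC (a : ℂ) : ℂ := if a = 0 then 1 else 0

/-- `δ_{a,0}`, as a natural number. -/
noncomputable def dN (a : ℂ) : ℕ := if a = 0 then 1 else 0

/-- `X = δ_{φ(q),0}e + δ_{φ(p),0}f`. -/
noncomputable def Xel (e f : S) (φp φq : ℂ) : UniversalEnvelopingAlgebra ℂ S :=
  dC φq • ι ℂ e + dC φp • ι ℂ f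

/-- `P₊ = δ_{φ(p),0}p + δ_{φ(q),0}q`. -/
noncomputable def Pplus (p q : S) (φp φq : ℂ) : UniversalEnvelopingAlgebra ℂ S :=
  dC φp • ι ℂ p + dC φq • ι ℂ q

/-- `P₋ = δ_{φ(q),0}p + δ_{φ(p),0}q`. -/
noncomputable def Pminus (p q : S) (φp φq : ℂ) : UniversalEnvelopingAlgebra ℂ S :=
  dC φq • ι ℂ p + dC φp • ι ℂ q

/-- The quotient of `U(𝔖)` by a left ideal `I` is a Lie module over `S`. -/
noncomputable instance instLieRingModuleUQuot
    (I : Submodule (UniversalEnvelopingAlgebra ℂ S) (UniversalEnvelopingAlgebra ℂ S)) :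
    LieRingModule S (UniversalEnvelopingAlgebra ℂ S ⧸ I) where
  bracket x m := ι ℂ x • m
  add_lie x y m := by
    show ι ℂ (x + y) • m = ι ℂ x • m + ι ℂ y • m
    rw [map_add, add_smul]
  lie_add x m n := by
    show ι ℂ x • (m + n) = ι ℂ x • m + ι ℂ x • n
    rw [smul_add]
  leibniz_lie x y m := by
    show ι ℂ x • (ι ℂ y • m) = ι ℂ ⁅x, y⁆ • m + ι ℂ y • (ι ℂ x • m)
    letI := LieRing.ofAssociativeRing (A := UniversalEnvelopingAlgebra ℂ S)
    rw [LieHom.map_lie, Ring.lie_def, sub_smul, mul_smul, mul_smul]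
    abel

noncomputable instance instLieModuleUQuot
    (I : Submodule (UniversalEnvelopingAlgebra ℂ S) (UniversalEnvelopingAlgebra ℂ S)) :
    LieModule ℂ S (UniversalEnvelopingAlgebra ℂ S ⧸ I) where
  smul_lie c x m := by
    show ι ℂ (c • x) • m = c • (ι ℂ x • m)
    rw [map_smul, smul_assoc]
  lie_smul c x m := by
    show ι ℂ x • (c • m) = c • (ι ℂ x • m)
    rw [← algebraMap_smul (UniversalEnvelopingAlgebra ℂ S) c m, ← mul_smul,
      ← Algebra.commutes, mul_smul, algebraMap_smul]

/-- The left ideal of `U(𝔖)` generated by `p − φ(p)1`, `q − φ(q)1` and `z`. -/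
noncomputable def qwIdeal (p q z : S) (φp φq : ℂ) :
    Submodule (UniversalEnvelopingAlgebra ℂ S) (UniversalEnvelopingAlgebra ℂ S) :=
  Submodule.span _
    {ι ℂ p - algebraMap ℂ _ φp, ι ℂ q - algebraMap ℂ _ φq, ι ℂ z}

/-- The universal quasi-Whittaker module `M_φ = U(𝔖) ⊗_{U(ℌ)} ℂ_φ`, realised as the
quotient of `U(𝔖)` by the left ideal generated by `p − φ(p)1`, `q − φ(q)1`, `z`. -/
noncomputable abbrev Mphi (p q z : S) (φp φq : ℂ) : Type :=
  UniversalEnvelopingAlgebra ℂ S ⧸ qwIdeal p q z φp φq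

/-- The cyclic quasi-Whittaker vector `w = 1 ⊗ w` of `M_φ`. -/
noncomputable def wvec (p q z : S) (φp φq : ℂ) : Mphi p q z φp φq :=
  Submodule.Quotient.mk 1

/-- The submodule `W_{φ,ξ} = U(𝔖)(C − ξ)·w` of `M_φ`. -/
noncomputable def Wsub (e h f p q z : S) (φp φq ξ : ℂ) :
    LieSubmodule ℂ S (Mphi p q z φp φq) :=
  LieSubmodule.lieSpan ℂ S
    {uact (Cel e h f φp φq - algebraMap ℂ _ ξ) (wvec p q z φp φq)}

/-- The quotient module `L_{φ,ξ} = M_φ / W_{φ,ξ}`. -/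
noncomputable abbrev Lphi (e h f p q z : S) (φp φq ξ : ℂ) : Type :=
  Mphi p q z φp φq ⧸ Wsub e h f p q z φp φq ξ

/-- A (finite, decreasing) composition series `⊤ = W 0 > W 1 > ⋯ > W n = ⊥`
of a Lie module, with all the successive quotients irreducible. -/
def IsCompositionChain {V : Type} [AddCommGroup V] [Module ℂ V] [LieRingModule S V]
    [LieModule ℂ S V] {n : ℕ} (W : Fin (n + 1) → LieSubmodule ℂ S V) : Prop :=
  W 0 = ⊤ ∧ W (Fin.last n) = ⊥ ∧
    ∀ i : Fin n, W i.succ < W i.castSucc ∧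
      LieModule.IsIrreducible ℂ S
        (↥(W i.castSucc) ⧸ LieSubmodule.comap (W i.castSucc).incl (W i.succ))


local notation "U" => UniversalEnvelopingAlgebra ℂ S

lemma imul (x y : S) : ι ℂ x * ι ℂ y = ι ℂ y * ι ℂ x + ι ℂ ⁅x, y⁆ := by
  letI := LieRing.ofAssociativeRing (A := U)
  have hxy := LieHom.map_lie (ι ℂ (L := S)) x y
  rw [Ring.lie_def] at hxy
  rw [hxy]; abel

lemma q_shift {H Q : S} {s : ℂ} (hQH : ⁅Q, H⁆ = s • Q) (t : ℂ) (j : ℕ) :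
    ι ℂ Q * (ι ℂ H + algebraMap ℂ U t) ^ j
      = (ι ℂ H + algebraMap ℂ U (t + s)) ^ j * ι ℂ Q := by
  induction j with
  | zero => simp
  | succ j ih =>
    have h1 : ι ℂ Q * (ι ℂ H + algebraMap ℂ U t)
        = (ι ℂ H + algebraMap ℂ U (t + s)) * ι ℂ Q := by
      rw [mul_add, add_mul, imul Q H, hQH, map_smul, map_add,
        ← Algebra.commutes t (ι ℂ Q), add_mul, Algebra.smul_def, Algebra.commutes s (ι ℂ Q)]
      abel
    calc ι ℂ Q * (ι ℂ H + algebraMap ℂ U t) ^ (j + 1)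
        = (ι ℂ Q * (ι ℂ H + algebraMap ℂ U t)) * (ι ℂ H + algebraMap ℂ U t) ^ j := by
          rw [pow_succ', mul_assoc]
      _ = (ι ℂ H + algebraMap ℂ U (t + s)) * (ι ℂ Q * (ι ℂ H + algebraMap ℂ U t) ^ j) := by
          rw [h1, mul_assoc]
      _ = (ι ℂ H + algebraMap ℂ U (t + s)) ^ (j + 1) * ι ℂ Q := by
          rw [ih, pow_succ', mul_assoc]

lemma p_shift_pow {H P : S} {s : ℂ} (hPH : ⁅P, H⁆ = (-s) • P) (t : ℂ) (j n : ℕ) :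
    ι ℂ P ^ n * (ι ℂ H + algebraMap ℂ U t) ^ j
      = (ι ℂ H + algebraMap ℂ U (t - n * s)) ^ j * ι ℂ P ^ n := by
  induction n generalizing t with
  | zero => simp
  | succ n ih =>
    have h1 := q_shift hPH (t - n * s) j
    calc ι ℂ P ^ (n + 1) * (ι ℂ H + algebraMap ℂ U t) ^ j
        = ι ℂ P * (ι ℂ P ^ n * (ι ℂ H + algebraMap ℂ U t) ^ j) := by
          rw [pow_succ', mul_assoc]
      _ = ι ℂ P * (ι ℂ H + algebraMap ℂ U (t - n * s)) ^ j * ι ℂ P ^ n := by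
          rw [ih, mul_assoc]
      _ = (ι ℂ H + algebraMap ℂ U (t - ((n + 1 : ℕ) : ℂ) * s)) ^ j * ι ℂ P ^ (n + 1) := by
          have h2 : t - ↑n * s + -s = t - (Nat.cast (n + 1) : ℂ) * s := by
            push_cast; ring
          rw [h2] at h1
          rw [h1, mul_assoc, ← pow_succ']

lemma p_comm_E {P E : S} (hPE : ⁅P, E⁆ = 0) (i : ℕ) :
    ι ℂ P * ι ℂ E ^ i = ι ℂ E ^ i * ι ℂ P := by
  induction i with
  | zero => simp
  | succ i ih =>
    rw [pow_succ', ← mul_assoc, imul P E, hPE, map_zero, add_zero, mul_assoc, ih,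
      ← mul_assoc]

lemma q_E_succ {P Q E : S} (hQE : ⁅Q, E⁆ = -P) (hPE : ⁅P, E⁆ = 0) (i : ℕ) :
    ι ℂ Q * ι ℂ E ^ (i + 1)
      = ι ℂ E ^ (i + 1) * ι ℂ Q - ((i : ℂ) + 1) • (ι ℂ E ^ i * ι ℂ P) := by
  induction i with
  | zero =>
    rw [pow_one, imul Q E, hQE, map_neg]
    simp only [pow_zero, one_mul, Nat.cast_zero, zero_add, one_smul]
    abel
  | succ i ih =>
    have step : ι ℂ Q * ι ℂ E ^ (i + 2)
        = ι ℂ E * (ι ℂ Q * ι ℂ E ^ (i + 1)) - ι ℂ P * ι ℂ E ^ (i + 1) := by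
      have : ι ℂ Q * ι ℂ E ^ (i + 2) = (ι ℂ Q * ι ℂ E) * ι ℂ E ^ (i + 1) := by
        rw [mul_assoc, ← pow_succ']
      rw [this, imul Q E, hQE, map_neg, add_mul, mul_assoc, neg_mul]
      abel
    rw [step, ih, p_comm_E hPE, mul_sub, mul_smul_comm, ← mul_assoc, ← pow_succ',
      ← mul_assoc, ← pow_succ']
    have : ((i : ℂ) + 1 + 1) • (ι ℂ E ^ (i + 1) * ι ℂ P)
        = ((i : ℂ) + 1) • (ι ℂ E ^ (i + 1) * ι ℂ P) + (ι ℂ E ^ (i + 1) * ι ℂ P) := by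
      rw [add_smul, one_smul]
    push_cast
    rw [this]
    abel

lemma q_E {P Q E : S} (hQE : ⁅Q, E⁆ = -P) (hPE : ⁅P, E⁆ = 0) (i : ℕ) :
    ι ℂ Q * ι ℂ E ^ i = ι ℂ E ^ i * ι ℂ Q - (i : ℂ) • (ι ℂ E ^ (i - 1) * ι ℂ P) := by
  rcases i with _ | i
  · simp
  · rw [q_E_succ hQE hPE i]
    norm_num

lemma commute_aeval {x y : U} (hxy : Commute x y) (b : ℂ[X]) :
    Commute x (aeval y b) := by
  rw [Polynomial.aeval_eq_sum_range]
  exact Commute.sum_right _ _ _ (fun i _ => ((hxy.pow_right i).smul_right _))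

section Quot

lemma factB' (I : Submodule U U) {Q : S}
    (hQk : ∀ u : U, I.mkQ (u * ι ℂ Q) = (0 : U ⧸ I))
    {Cu : U} (hQC : Commute (ι ℂ Q) Cu) (u : U) (b : ℂ[X]) :
    I.mkQ (u * (ι ℂ Q * aeval Cu b)) = 0 := by
  rw [(commute_aeval hQC b).eq, ← mul_assoc]
  exact hQk _

lemma factB_monomial (I : Submodule U U) {P Q : S} {lam : ℂ}
    (hQk : ∀ u : U, I.mkQ (u * ι ℂ Q) = (0 : U ⧸ I))
    (hPk : ∀ u : U, I.mkQ (u * ι ℂ P) = lam • (I.mkQ u : U ⧸ I))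
    {Cu : U} {c : ℂ} (hQC : Commute (ι ℂ Q) Cu)
    (hPC : ι ℂ P * Cu = Cu * ι ℂ P + c • ι ℂ Q) (k : ℕ) (u : U) :
    I.mkQ (u * (ι ℂ P * Cu ^ k)) = lam • (I.mkQ (u * Cu ^ k) : U ⧸ I) := by
  induction k generalizing u with
  | zero => simpa using hPk u
  | succ k ih =>
    have expand : ι ℂ P * Cu ^ (k + 1)
        = Cu * (ι ℂ P * Cu ^ k) + c • (Cu ^ k * ι ℂ Q) := by
      rw [pow_succ', ← mul_assoc, hPC, add_mul, mul_assoc, smul_mul_assoc,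
        (hQC.pow_right k).eq]
    rw [expand, mul_add, map_add, ← mul_assoc u Cu, ih (u * Cu), mul_smul_comm,
      LinearMap.map_smul_of_tower, ← mul_assoc u, hQk, smul_zero, add_zero, mul_assoc,
      ← pow_succ']

lemma factB (I : Submodule U U) {P Q : S} {lam : ℂ}
    (hQk : ∀ u : U, I.mkQ (u * ι ℂ Q) = (0 : U ⧸ I))
    (hPk : ∀ u : U, I.mkQ (u * ι ℂ P) = lam • (I.mkQ u : U ⧸ I))
    {Cu : U} {c : ℂ} (hQC : Commute (ι ℂ Q) Cu)
    (hPC : ι ℂ P * Cu = Cu * ι ℂ P + c • ι ℂ Q) (u : U) (b : ℂ[X]) :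
    I.mkQ (u * (ι ℂ P * aeval Cu b)) = lam • (I.mkQ (u * aeval Cu b) : U ⧸ I) := by
  induction b using Polynomial.induction_on' with
  | add f g hf hg =>
    rw [map_add, mul_add, mul_add, map_add, hf, hg, mul_add, map_add, smul_add]
  | monomial k a =>
    rw [Polynomial.aeval_monomial, ← Algebra.smul_def]
    simp only [mul_smul_comm, LinearMap.map_smul_of_tower]
    rw [factB_monomial I hQk hPk hQC hPC k u, smul_comm]

lemma factBn (I : Submodule U U) {P Q : S} {lam : ℂ}
    (hQk : ∀ u : U, I.mkQ (u * ι ℂ Q) = (0 : U ⧸ I))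
    (hPk : ∀ u : U, I.mkQ (u * ι ℂ P) = lam • (I.mkQ u : U ⧸ I))
    {Cu : U} {c : ℂ} (hQC : Commute (ι ℂ Q) Cu)
    (hPC : ι ℂ P * Cu = Cu * ι ℂ P + c • ι ℂ Q) (n : ℕ) (u : U) (b : ℂ[X]) :
    I.mkQ (u * (ι ℂ P ^ n * aeval Cu b)) = lam ^ n • (I.mkQ (u * aeval Cu b) : U ⧸ I) := by
  induction n generalizing u with
  | zero => simp
  | succ n ih =>
    rw [pow_succ, mul_assoc, ← mul_assoc u, factB I hQk hPk hQC hPC, mul_assoc, ih,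
      smul_smul, ← pow_succ']

lemma stepU {E H P Q : S} {s : ℂ} (hQE : ⁅Q, E⁆ = -P) (hPE : ⁅P, E⁆ = 0)
    (hQH : ⁅Q, H⁆ = s • Q) (hPH : ⁅P, H⁆ = (-s) • P) (t : ℂ) (i j : ℕ) (A : U) :
    ι ℂ Q * (ι ℂ E ^ i * ((ι ℂ H + algebraMap ℂ U t) ^ j * A))
      = (ι ℂ E ^ i * (ι ℂ H + algebraMap ℂ U (t + s)) ^ j) * (ι ℂ Q * A)
        - (i : ℂ) • ((ι ℂ E ^ (i - 1) * (ι ℂ H + algebraMap ℂ U (t - s)) ^ j) * (ι ℂ P * A)) := by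
  rw [← mul_assoc, q_E hQE hPE, sub_mul, smul_mul_assoc]
  have hq : ι ℂ Q * ((ι ℂ H + algebraMap ℂ U t) ^ j * A)
      = (ι ℂ H + algebraMap ℂ U (t + s)) ^ j * (ι ℂ Q * A) := by
    rw [← mul_assoc, q_shift hQH, mul_assoc]
  have hp : ι ℂ P * ((ι ℂ H + algebraMap ℂ U t) ^ j * A)
      = (ι ℂ H + algebraMap ℂ U (t - s)) ^ j * (ι ℂ P * A) := by
    rw [← mul_assoc, q_shift hPH, mul_assoc, ← sub_eq_add_neg]
  rw [mul_assoc (ι ℂ E ^ i), hq, ← mul_assoc (ι ℂ E ^ i),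
    mul_assoc (ι ℂ E ^ (i - 1)), hp, ← mul_assoc (ι ℂ E ^ (i - 1))]

lemma Qpow (I : Submodule U U) {E H P Q : S} {lam s : ℂ}
    (hQk : ∀ u : U, I.mkQ (u * ι ℂ Q) = (0 : U ⧸ I))
    (hPk : ∀ u : U, I.mkQ (u * ι ℂ P) = lam • (I.mkQ u : U ⧸ I))
    {Cu : U} {c : ℂ} (hQC : Commute (ι ℂ Q) Cu)
    (hPC : ι ℂ P * Cu = Cu * ι ℂ P + c • ι ℂ Q)
    (hQE : ⁅Q, E⁆ = -P) (hPE : ⁅P, E⁆ = 0)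
    (hQH : ⁅Q, H⁆ = s • Q) (hPH : ⁅P, H⁆ = (-s) • P) (j : ℕ) (b : ℂ[X]) :
    ∀ (r i : ℕ) (t : ℂ),
      I.mkQ (ι ℂ Q ^ r * (ι ℂ E ^ i * ((ι ℂ H + algebraMap ℂ U t) ^ j * aeval Cu b)))
        = ((-lam) ^ r * (i.descFactorial r : ℂ)) •
            (I.mkQ (ι ℂ E ^ (i - r)
              * ((ι ℂ H + algebraMap ℂ U (t - r * s)) ^ j * aeval Cu b)) : U ⧸ I) := by
  intro r
  induction r with
  | zero =>
    intro i t
    simp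
  | succ r ih =>
    intro i t
    rw [pow_succ, mul_assoc, stepU hQE hPE hQH hPH t i j (aeval Cu b), mul_sub,
      mul_smul_comm, map_sub, LinearMap.map_smul_of_tower, ← mul_assoc,
      factB' I hQk hQC, ← mul_assoc, factB I hQk hPk hQC hPC,
      mul_assoc (ι ℂ Q ^ r), mul_assoc (ι ℂ E ^ (i - 1)), ih (i - 1) (t - s),
      zero_sub]
    have hidx : i - 1 - r = i - (r + 1) := by omega
    have ht : t - s - ↑r * s = t - (↑(r + 1) : ℂ) * s := by push_cast; ring
    rw [hidx, ht, smul_smul, smul_smul, ← neg_smul]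
    have hcast : t - (↑(r + 1) : ℂ) * s = t - (Nat.cast (r+1) : ℂ) * s := by norm_cast
    congr 1
    rcases i with _ | i
    · simp
    · rw [Nat.succ_descFactorial_succ, Nat.succ_sub_one]
      push_cast
      ring

lemma Ppow (I : Submodule U U) {H P Q : S} {lam s : ℂ}
    (hQk : ∀ u : U, I.mkQ (u * ι ℂ Q) = (0 : U ⧸ I))
    (hPk : ∀ u : U, I.mkQ (u * ι ℂ P) = lam • (I.mkQ u : U ⧸ I))
    {Cu : U} {c : ℂ} (hQC : Commute (ι ℂ Q) Cu)
    (hPC : ι ℂ P * Cu = Cu * ι ℂ P + c • ι ℂ Q)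
    (hPH : ⁅P, H⁆ = (-s) • P) (n j : ℕ) (b : ℂ[X]) :
    I.mkQ (ι ℂ P ^ n * (ι ℂ H ^ j * aeval Cu b))
      = lam ^ n •
          (I.mkQ ((ι ℂ H + algebraMap ℂ U (0 - n * s)) ^ j * aeval Cu b) : U ⧸ I) := by
  have h0 : (ι ℂ H : U) ^ j = (ι ℂ H + algebraMap ℂ U 0) ^ j := by
    rw [map_zero, add_zero]
  rw [h0, ← mul_assoc, p_shift_pow hPH 0 j n, mul_assoc,
    factBn I hQk hPk hQC hPC n _ b]

lemma generic (I : Submodule U U) {E H P Q : S} {lam s : ℂ}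
    (hQk : ∀ u : U, I.mkQ (u * ι ℂ Q) = (0 : U ⧸ I))
    (hPk : ∀ u : U, I.mkQ (u * ι ℂ P) = lam • (I.mkQ u : U ⧸ I))
    {Cu : U} {c : ℂ} (hQC : Commute (ι ℂ Q) Cu)
    (hPC : ι ℂ P * Cu = Cu * ι ℂ P + c • ι ℂ Q)
    (hQE : ⁅Q, E⁆ = -P) (hPE : ⁅P, E⁆ = 0)
    (hQH : ⁅Q, H⁆ = s • Q) (hPH : ⁅P, H⁆ = (-s) • P) (n m : ℕ) (a : ℕ → ℕ → ℂ[X]) :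
    I.mkQ (ι ℂ Q ^ n * ∑ i ∈ Finset.range (n + 1), ι ℂ E ^ i *
        ∑ j ∈ Finset.range (m + 1), ι ℂ H ^ j * aeval Cu (a i j))
      = ((-1 : ℂ) ^ n * (n.factorial : ℂ)) •
          (I.mkQ (∑ j ∈ Finset.range (m + 1),
            ι ℂ P ^ n * (ι ℂ H ^ j * aeval Cu (a n j))) : U ⧸ I) := by
  have keyterm : ∀ i j' : ℕ,
      I.mkQ (ι ℂ Q ^ n * (ι ℂ E ^ i * (ι ℂ H ^ j' * aeval Cu (a i j'))))
        = ((-lam) ^ n * (i.descFactorial n : ℂ)) •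
            (I.mkQ (ι ℂ E ^ (i - n)
              * ((ι ℂ H + algebraMap ℂ U (0 - n * s)) ^ j' * aeval Cu (a i j'))) : U ⧸ I) := by
    intro i j'
    have h0 : (ι ℂ H : U) ^ j' = (ι ℂ H + algebraMap ℂ U 0) ^ j' := by
      rw [map_zero, add_zero]
    rw [h0]
    exact Qpow I hQk hPk hQC hPC hQE hPE hQH hPH j' (a i j') n i 0
  simp only [Finset.mul_sum, map_sum, keyterm]
  rw [Finset.sum_eq_single_of_mem n (Finset.self_mem_range_succ n)
    (fun i hi hne => ?_)]
  · simp only [Nat.sub_self, pow_zero, one_mul, Nat.descFactorial_self]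
    simp only [Ppow I hQk hPk hQC hPC hPH n, Finset.smul_sum, smul_smul]
    refine Finset.sum_congr rfl fun j _ => ?_
    congr 1
    rw [neg_pow]
    ring
  · have hlt : i < n := by
      have := Finset.mem_range.mp hi
      omega
    rw [Nat.descFactorial_eq_zero_iff_lt.mpr hlt]
    simp

end Quot

lemma uact_eq_smul (I : Submodule U U) (u : U) (v : U ⧸ I) :
    uact u v = u • v := by
  have hh : UniversalEnvelopingAlgebra.lift ℂ (LieModule.toEnd ℂ S (U ⧸ I))
      = Algebra.lsmul ℂ ℂ (U ⧸ I) := by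
    apply UniversalEnvelopingAlgebra.hom_ext
    letI := LieRing.ofAssociativeRing (A := Module.End ℂ (U ⧸ I))
    apply LieHom.ext
    intro x
    apply LinearMap.ext
    intro m
    show UniversalEnvelopingAlgebra.lift ℂ (LieModule.toEnd ℂ S (U ⧸ I)) (ι ℂ x) m
      = ι ℂ x • m
    rw [UniversalEnvelopingAlgebra.lift_ι_apply]
    rfl
  simp only [uact, hh]
  rfl

lemma mkq_p (p q z : S) (φp φq : ℂ) (u : U) :
    (qwIdeal p q z φp φq).mkQ (u * ι ℂ p)
      = φp • ((qwIdeal p q z φp φq).mkQ u : U ⧸ qwIdeal p q z φp φq) := by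
  have h2 : u * (ι ℂ p - algebraMap ℂ U φp) ∈ qwIdeal p q z φp φq := by
    have := Submodule.smul_mem (qwIdeal p q z φp φq) u
      (Submodule.subset_span (Set.mem_insert _ _))
    simpa [smul_eq_mul] using this
  rw [Submodule.mkQ_apply, Submodule.mkQ_apply, ← Submodule.Quotient.mk_smul,
    Submodule.Quotient.eq]
  have h1 : u * ι ℂ p - φp • u = u * (ι ℂ p - algebraMap ℂ U φp) := by
    rw [mul_sub, Algebra.smul_def, Algebra.commutes]
  rw [h1]
  exact h2

lemma mkq_q (p q z : S) (φp φq : ℂ) (u : U) :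
    (qwIdeal p q z φp φq).mkQ (u * ι ℂ q)
      = φq • ((qwIdeal p q z φp φq).mkQ u : U ⧸ qwIdeal p q z φp φq) := by
  have h2 : u * (ι ℂ q - algebraMap ℂ U φq) ∈ qwIdeal p q z φp φq := by
    have := Submodule.smul_mem (qwIdeal p q z φp φq) u
      (Submodule.subset_span (Set.mem_insert_of_mem _ (Set.mem_insert _ _)))
    simpa [smul_eq_mul] using this
  rw [Submodule.mkQ_apply, Submodule.mkQ_apply, ← Submodule.Quotient.mk_smul,
    Submodule.Quotient.eq]
  have h1 : u * ι ℂ q - φq • u = u * (ι ℂ q - algebraMap ℂ U φq) := by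
    rw [mul_sub, Algebra.smul_def, Algebra.commutes]
  rw [h1]
  exact h2

lemma uact_wvec (p q z : S) (φp φq : ℂ) (u : U) :
    uact u (wvec p q z φp φq) = (qwIdeal p q z φp φq).mkQ u := by
  rw [uact_eq_smul, wvec, Submodule.mkQ_apply, ← Submodule.Quotient.mk_smul,
    smul_eq_mul, mul_one]


/-- For `φ` nonzero with `φ(p)φ(q) = 0` and
`x = Σ_{i=0}^{n} Xⁱ Σ_{j=0}^{m} hʲ a_{ij}(C)·w ∈ M_φ`, one has
`(P₊ − φ(P₊))ⁿ·x = (−1)ⁿ n! Σ_{j=0}^{m} P₋ⁿ hʲ a_{nj}(C)·w`. -/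
theorem Pplus_power_action
    (e h f p q z : S) (hS : IsSchrodinger e h f p q z)
    (φp φq : ℂ) (hφ : φp ≠ 0 ∨ φq ≠ 0) (hpq : φp * φq = 0)
    (n m : ℕ) (a : ℕ → ℕ → ℂ[X]) :
    uact ((Pplus p q φp φq - algebraMap ℂ _ (dC φp * φp + dC φq * φq)) ^ n)
        (uact (∑ i ∈ Finset.range (n + 1), Xel e f φp φq ^ i *
            ∑ j ∈ Finset.range (m + 1), ι ℂ h ^ j * aeval (Cel e h f φp φq) (a i j))
          (wvec p q z φp φq)) =
      ((-1 : ℂ) ^ n * n.factorial) •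
        uact (∑ j ∈ Finset.range (m + 1),
            Pminus p q φp φq ^ n * (ι ℂ h ^ j * aeval (Cel e h f φp φq) (a n j)))
          (wvec p q z φp φq) := by
  rcases mul_eq_zero.mp hpq with hzero | hzero
  · -- φp = 0, so φq ≠ 0 : use E = f, Q = p, P = q, s = -1, lam = φq
    have hqne : φq ≠ 0 := by
      rcases hφ with h' | h'
      · exact absurd hzero h'
      · exact h'
    have hdp : dC φp = 1 := by simp [dC, hzero]
    have hdq : dC φq = 0 := by simp [dC, hqne]
    have hP : Pplus p q φp φq = ι ℂ p := by rw [Pplus, hdp, hdq]; simp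
    have hPm : Pminus p q φp φq = ι ℂ q := by rw [Pminus, hdp, hdq]; simp
    have hX : Xel e f φp φq = ι ℂ f := by rw [Xel, hdp, hdq]; simp
    have hscal : dC φp * φp + dC φq * φq = 0 := by rw [hdp, hdq, hzero]; ring
    have hC : Cel e h f φp φq = (-(φq ^ 2)) • ι ℂ e := by
      rw [Cel, hzero]
      simp
    have hQk : ∀ u : U, (qwIdeal p q z φp φq).mkQ (u * ι ℂ p) = 0 := fun u => by
      rw [mkq_p, hzero, zero_smul]
    have hPk : ∀ u : U, (qwIdeal p q z φp φq).mkQ (u * ι ℂ q)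
        = φq • ((qwIdeal p q z φp φq).mkQ u : U ⧸ qwIdeal p q z φp φq) :=
      mkq_q p q z φp φq
    have hpe : ι ℂ p * ι ℂ e = ι ℂ e * ι ℂ p := by
      rw [imul p e, ← lie_skew, hS.lie_ep, neg_zero, map_zero, add_zero]
    have hQC : Commute (ι ℂ p) ((-(φq ^ 2)) • ι ℂ e) := by
      show ι ℂ p * ((-(φq ^ 2)) • ι ℂ e) = ((-(φq ^ 2)) • ι ℂ e) * ι ℂ p
      rw [mul_smul_comm, smul_mul_assoc, hpe]
    have hqe : ι ℂ q * ι ℂ e = ι ℂ e * ι ℂ q + -(ι ℂ p) := by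
      rw [imul q e, ← lie_skew, hS.lie_eq, map_neg]
    have hPC : ι ℂ q * ((-(φq ^ 2)) • ι ℂ e)
        = ((-(φq ^ 2)) • ι ℂ e) * ι ℂ q + (φq ^ 2) • ι ℂ p := by
      rw [mul_smul_comm, hqe, smul_add, smul_mul_assoc]
      congr 1
      rw [smul_neg, neg_smul, neg_neg]
    have hQE : ⁅p, f⁆ = -q := hS.lie_pf
    have hPE : ⁅q, f⁆ = 0 := by rw [← lie_skew, hS.lie_fq, neg_zero]
    have hQH : ⁅p, h⁆ = ((-1 : ℂ)) • p := by
      rw [← lie_skew, hS.lie_hp, neg_smul, one_smul]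
    have hPH : ⁅q, h⁆ = (-(-1 : ℂ)) • q := by
      rw [← lie_skew, hS.lie_hq, neg_neg, neg_neg, one_smul]
    rw [hscal, map_zero, sub_zero, hP]
    simp only [hX, hC, hPm]
    rw [uact_wvec, uact_wvec, uact_eq_smul, ← LinearMap.map_smul, smul_eq_mul]
    exact generic (qwIdeal p q z φp φq) hQk hPk hQC hPC hQE hPE hQH hPH n m a
  · -- φq = 0, so φp ≠ 0 : use E = e, Q = q, P = p, s = 1, lam = φp
    have hpne : φp ≠ 0 := by
      rcases hφ with h' | h'
      · exact h'
      · exact absurd hzero h'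
    have hdp : dC φp = 0 := by simp [dC, hpne]
    have hdq : dC φq = 1 := by simp [dC, hzero]
    have hP : Pplus p q φp φq = ι ℂ q := by rw [Pplus, hdp, hdq]; simp
    have hPm : Pminus p q φp φq = ι ℂ p := by rw [Pminus, hdp, hdq]; simp
    have hX : Xel e f φp φq = ι ℂ e := by rw [Xel, hdp, hdq]; simp
    have hscal : dC φp * φp + dC φq * φq = 0 := by rw [hdp, hdq, hzero]; ring
    have hC : Cel e h f φp φq = (φp ^ 2) • ι ℂ f := by
      rw [Cel, hzero]
      simp
    have hQk : ∀ u : U, (qwIdeal p q z φp φq).mkQ (u * ι ℂ q) = 0 := fun u => by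
      rw [mkq_q, hzero, zero_smul]
    have hPk : ∀ u : U, (qwIdeal p q z φp φq).mkQ (u * ι ℂ p)
        = φp • ((qwIdeal p q z φp φq).mkQ u : U ⧸ qwIdeal p q z φp φq) :=
      mkq_p p q z φp φq
    have hqf : ι ℂ q * ι ℂ f = ι ℂ f * ι ℂ q := by
      rw [imul q f, ← lie_skew, hS.lie_fq, neg_zero, map_zero, add_zero]
    have hQC : Commute (ι ℂ q) ((φp ^ 2) • ι ℂ f) := by
      show ι ℂ q * ((φp ^ 2) • ι ℂ f) = ((φp ^ 2) • ι ℂ f) * ι ℂ q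
      rw [mul_smul_comm, smul_mul_assoc, hqf]
    have hpf : ι ℂ p * ι ℂ f = ι ℂ f * ι ℂ p + -(ι ℂ q) := by
      rw [imul p f, hS.lie_pf, map_neg]
    have hPC : ι ℂ p * ((φp ^ 2) • ι ℂ f)
        = ((φp ^ 2) • ι ℂ f) * ι ℂ p + (-(φp ^ 2)) • ι ℂ q := by
      rw [mul_smul_comm, hpf, smul_add, smul_mul_assoc]
      congr 1
      rw [smul_neg, neg_smul]
    have hQE : ⁅q, e⁆ = -p := by rw [← lie_skew, hS.lie_eq]
    have hPE : ⁅p, e⁆ = 0 := by rw [← lie_skew, hS.lie_ep, neg_zero]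
    have hQH : ⁅q, h⁆ = ((1 : ℂ)) • q := by
      rw [← lie_skew, hS.lie_hq, neg_neg, one_smul]
    have hPH : ⁅p, h⁆ = (-(1 : ℂ)) • p := by
      rw [← lie_skew, hS.lie_hp, neg_smul, one_smul]
    rw [hscal, map_zero, sub_zero, hP]
    simp only [hX, hC, hPm]
    rw [uact_wvec, uact_wvec, uact_eq_smul, ← LinearMap.map_smul, smul_eq_mul]
    exact generic (qwIdeal p q z φp φq) hQk hPk hQC hPC hQE hPE hQH hPH n m a


end QW
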